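/- Adequacy of the anti-sequent calculus R_P for the three-valued logic P: a P-anti-sequent Γ₁ ∤ Γ₂ ∤ Γ₃ is provable in R_P if and only if it is refutable. -/

import Mathlib

/-!
Every rule of `R_P` is semantically invertible: for each connective and each component, the
condition `v_I(θ) ≠ c` on the principal formula is equivalent to the disjunction, over the rules
introducing `θ` in that component, of the conditions under which `I` refutes their premisses
(`V3.negv_ne_f`, …, `V3.impv_ne_t`). Read from right to left this gives soundness; read from
left to right it drives a backward proof search guided by a fixed refuting interpretation, which
ends in an axiom once only atoms and `F` remain. The search terminates: a premiss may put a
subformula into two components, but a binary connective weighs more than twice its immediate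
subformulas.
-/

/-- Truth values of the three-valued logic P: f < b < t. -/
inductive V3 : Type
  | f | b | t
deriving DecidableEq, Repr

namespace V3

/-- Negation: t, b, f ↦ f, b, t. -/
def negv : V3 → V3
  | .f => .t
  | .b => .b
  | .t => .f

/-- Conjunction: minimum with respect to f < b < t. -/
def conjv : V3 → V3 → V3
  | .f, _ => .f
  | _, .f => .f
  | .b, _ => .b
  | _, .b => .b
  | .t, .t => .t

/-- Implication: `x ⊃ y` is `y` if `x` is designated (b or t), and `t` otherwise. -/
def impv : V3 → V3 → V3
  | .f, _ => .t
  | _, y => y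

end V3

/-- Formulas of the three-valued logic P, with atoms indexed by ℕ, the constant
F, negation, conjunction, and implication. -/
inductive PForm : Type
  | atom : ℕ → PForm
  | fls : PForm
  | neg : PForm → PForm
  | conj : PForm → PForm → PForm
  | imp : PForm → PForm → PForm
deriving DecidableEq

namespace PForm

/-- The valuation of P extending an interpretation `I : ℕ → V3`. -/
def val (I : ℕ → V3) : PForm → V3
  | atom p => I p
  | fls => .f
  | neg φ => (φ.val I).negv
  | conj φ ψ => (φ.val I).conjv (ψ.val I)
  | imp φ ψ => (φ.val I).impv (ψ.val I)

/-- `I` is a P-model of `φ`: `v_I(φ)` is designated, i.e. b or t. -/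
def IsModel (I : ℕ → V3) (φ : PForm) : Prop := φ.val I = .b ∨ φ.val I = .t

/-- `I` is a P-model of the theory `Γ`. -/
def IsModelSet (I : ℕ → V3) (Γ : Set PForm) : Prop := ∀ φ ∈ Γ, IsModel I φ

end PForm

/-- A P-anti-sequent `Γ₁ ∤ Γ₂ ∤ Γ₃` is refuted by `I` if no formula of `Γ₁`
takes value f, no formula of `Γ₂` takes value b, and no formula of `Γ₃` takes
value t under `I`. -/
def PAntiRefutedBy (I : ℕ → V3) (Γ₁ Γ₂ Γ₃ : Finset PForm) : Prop :=
  (∀ φ ∈ Γ₁, φ.val I ≠ .f) ∧ (∀ φ ∈ Γ₂, φ.val I ≠ .b) ∧ (∀ φ ∈ Γ₃, φ.val I ≠ .t)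

/-- A P-anti-sequent is refutable if some interpretation refutes it. -/
def PAntiRefutable (Γ₁ Γ₂ Γ₃ : Finset PForm) : Prop := ∃ I, PAntiRefutedBy I Γ₁ Γ₂ Γ₃

/-- A formula that is an atom or the constant F. -/
def PForm.IsBasic : PForm → Prop
  | .atom _ => True
  | .fls => True
  | _ => False

/-- The anti-sequent calculus `R_P` for the three-valued logic P (components in
the order f ∤ b ∤ t). -/
inductive RP : Finset PForm → Finset PForm → Finset PForm → Prop
  | ax (Γ Δ Ω : Finset PForm) :
      (∀ φ ∈ Γ ∪ Δ ∪ Ω, φ.IsBasic) → Γ ∩ Δ ∩ Ω = ∅ → .fls ∉ Γ →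
      RP Γ Δ Ω
  | negF {Γ Δ Ω : Finset PForm} {φ : PForm} :
      RP Γ Δ (insert φ Ω) → RP (insert (.neg φ) Γ) Δ Ω
  | negB {Γ Δ Ω : Finset PForm} {φ : PForm} :
      RP Γ (insert φ Δ) Ω → RP Γ (insert (.neg φ) Δ) Ω
  | negT {Γ Δ Ω : Finset PForm} {φ : PForm} :
      RP (insert φ Γ) Δ Ω → RP Γ Δ (insert (.neg φ) Ω)
  | conjF {Γ Δ Ω : Finset PForm} {φ ψ : PForm} :
      RP (insert φ (insert ψ Γ)) Δ Ω → RP (insert (.conj φ ψ) Γ) Δ Ω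
  | conjB1 {Γ Δ Ω : Finset PForm} {φ ψ : PForm} :
      RP Γ (insert φ (insert ψ Δ)) Ω → RP Γ (insert (.conj φ ψ) Δ) Ω
  | conjB2 {Γ Δ Ω : Finset PForm} {φ ψ : PForm} :
      RP Γ (insert φ Δ) (insert φ Ω) → RP Γ (insert (.conj φ ψ) Δ) Ω
  | conjB3 {Γ Δ Ω : Finset PForm} {φ ψ : PForm} :
      RP Γ (insert ψ Δ) (insert ψ Ω) → RP Γ (insert (.conj φ ψ) Δ) Ω
  | conjT1 {Γ Δ Ω : Finset PForm} {φ ψ : PForm} :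
      RP Γ Δ (insert φ Ω) → RP Γ Δ (insert (.conj φ ψ) Ω)
  | conjT2 {Γ Δ Ω : Finset PForm} {φ ψ : PForm} :
      RP Γ Δ (insert ψ Ω) → RP Γ Δ (insert (.conj φ ψ) Ω)
  | impF1 {Γ Δ Ω : Finset PForm} {φ ψ : PForm} :
      RP Γ (insert φ Δ) (insert φ Ω) → RP (insert (.imp φ ψ) Γ) Δ Ω
  | impF2 {Γ Δ Ω : Finset PForm} {φ ψ : PForm} :
      RP (insert ψ Γ) Δ Ω → RP (insert (.imp φ ψ) Γ) Δ Ω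
  | impB1 {Γ Δ Ω : Finset PForm} {φ ψ : PForm} :
      RP Γ (insert φ Δ) (insert φ Ω) → RP Γ (insert (.imp φ ψ) Δ) Ω
  | impB2 {Γ Δ Ω : Finset PForm} {φ ψ : PForm} :
      RP Γ (insert ψ Δ) Ω → RP Γ (insert (.imp φ ψ) Δ) Ω
  | impT {Γ Δ Ω : Finset PForm} {φ ψ : PForm} :
      RP (insert φ Γ) Δ (insert ψ Ω) → RP Γ Δ (insert (.imp φ ψ) Ω)

namespace V3

theorem negv_ne_f (x : V3) : x.negv ≠ .f ↔ x ≠ .t := by cases x <;> decide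
theorem negv_ne_b (x : V3) : x.negv ≠ .b ↔ x ≠ .b := by cases x <;> decide
theorem negv_ne_t (x : V3) : x.negv ≠ .t ↔ x ≠ .f := by cases x <;> decide

theorem conjv_ne_f (x y : V3) : x.conjv y ≠ .f ↔ x ≠ .f ∧ y ≠ .f := by
  cases x <;> cases y <;> decide
theorem conjv_ne_b (x y : V3) :
    x.conjv y ≠ .b ↔ (x ≠ .b ∧ y ≠ .b) ∨ (x ≠ .b ∧ x ≠ .t) ∨ (y ≠ .b ∧ y ≠ .t) := by
  cases x <;> cases y <;> decide
theorem conjv_ne_t (x y : V3) : x.conjv y ≠ .t ↔ x ≠ .t ∨ y ≠ .t := by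
  cases x <;> cases y <;> decide

theorem impv_ne_f (x y : V3) : x.impv y ≠ .f ↔ (x ≠ .b ∧ x ≠ .t) ∨ y ≠ .f := by
  cases x <;> cases y <;> decide
theorem impv_ne_b (x y : V3) : x.impv y ≠ .b ↔ (x ≠ .b ∧ x ≠ .t) ∨ y ≠ .b := by
  cases x <;> cases y <;> decide
theorem impv_ne_t (x y : V3) : x.impv y ≠ .t ↔ x ≠ .f ∧ y ≠ .t := by
  cases x <;> cases y <;> decide

end V3

namespace PForm

theorem isBasic_iff {φ : PForm} : φ.IsBasic ↔ φ = fls ∨ ∃ p, φ = atom p := by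
  cases φ <;> simp [IsBasic]

def weight : PForm → ℕ
  | atom _ => 0
  | fls => 0
  | neg φ => φ.weight + 1
  | conj φ ψ => 2 * (φ.weight + ψ.weight) + 1
  | imp φ ψ => 2 * (φ.weight + ψ.weight) + 1

theorem sum_weight_insert_le (φ : PForm) (S : Finset PForm) :
    ∑ ψ ∈ insert φ S, ψ.weight ≤ φ.weight + ∑ ψ ∈ S, ψ.weight := by
  by_cases h : φ ∈ S
  · rw [Finset.insert_eq_self.2 h]
    exact Nat.le_add_left _ _
  · rw [Finset.sum_insert h]

end PForm

open PForm

def antiSequentWeight (Γ Δ Ω : Finset PForm) : ℕ :=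
  ∑ φ ∈ Γ, φ.weight + ∑ φ ∈ Δ, φ.weight + ∑ φ ∈ Ω, φ.weight

section Refutation

variable {I : ℕ → V3} {φ : PForm} {Γ Δ Ω : Finset PForm}

theorem pAntiRefutedBy_insert₁ :
    PAntiRefutedBy I (insert φ Γ) Δ Ω ↔ φ.val I ≠ .f ∧ PAntiRefutedBy I Γ Δ Ω := by
  simp only [PAntiRefutedBy, Finset.forall_mem_insert, and_assoc]

theorem pAntiRefutedBy_insert₂ :
    PAntiRefutedBy I Γ (insert φ Δ) Ω ↔ φ.val I ≠ .b ∧ PAntiRefutedBy I Γ Δ Ω := by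
  simp only [PAntiRefutedBy, Finset.forall_mem_insert]
  tauto

theorem pAntiRefutedBy_insert₃ :
    PAntiRefutedBy I Γ Δ (insert φ Ω) ↔ φ.val I ≠ .t ∧ PAntiRefutedBy I Γ Δ Ω := by
  simp only [PAntiRefutedBy, Finset.forall_mem_insert]
  tauto

theorem PAntiRefutedBy.inter_eq_empty (h : PAntiRefutedBy I Γ Δ Ω) : Γ ∩ Δ ∩ Ω = ∅ := by
  refine Finset.eq_empty_of_forall_notMem fun φ hφ => ?_
  simp only [Finset.mem_inter] at hφ
  obtain ⟨⟨hΓ, hΔ⟩, hΩ⟩ := hφ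
  cases hv : φ.val I
  exacts [h.1 φ hΓ hv, h.2.1 φ hΔ hv, h.2.2 φ hΩ hv]

end Refutation

theorem pAntiRefutable_of_isBasic {Γ Δ Ω : Finset PForm}
    (hbasic : ∀ φ ∈ Γ ∪ Δ ∪ Ω, φ.IsBasic) (hdisj : Γ ∩ Δ ∩ Ω = ∅) (hF : fls ∉ Γ) :
    PAntiRefutable Γ Δ Ω := by
  classical
  refine ⟨fun p => if atom p ∈ Γ then (if atom p ∈ Δ then .t else .b) else .f, ?_, ?_, ?_⟩
  all_goals
    intro φ hφ
    obtain rfl | ⟨p, rfl⟩ := isBasic_iff.1 (hbasic φ (by simp [hφ]))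
    · simp_all [val]
    · have : atom p ∉ Γ ∩ Δ ∩ Ω := by simp [hdisj]
      simp only [Finset.mem_inter] at this
      simp only [val]
      split_ifs <;> simp_all

theorem RP.pAntiRefutable {Γ Δ Ω : Finset PForm} (h : RP Γ Δ Ω) : PAntiRefutable Γ Δ Ω := by
  induction h with
  | ax Γ Δ Ω hbasic hdisj hF => exact pAntiRefutable_of_isBasic hbasic hdisj hF
  | _ =>
    obtain ⟨I, hI⟩ := ‹PAntiRefutable _ _ _›
    refine ⟨I, ?_⟩
    simp only [pAntiRefutedBy_insert₁, pAntiRefutedBy_insert₂, pAntiRefutedBy_insert₃, val,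
      V3.negv_ne_f, V3.negv_ne_b, V3.negv_ne_t, V3.conjv_ne_f, V3.conjv_ne_b, V3.conjv_ne_t,
      V3.impv_ne_f, V3.impv_ne_b, V3.impv_ne_t] at hI ⊢
    tauto

section Completeness

variable {I : ℕ → V3} {θ φ : PForm} {Γ Δ Ω : Finset PForm}

theorem antiSequentWeight_insert₁_le :
    antiSequentWeight (insert φ Γ) Δ Ω ≤ φ.weight + antiSequentWeight Γ Δ Ω := by
  have := sum_weight_insert_le φ Γ
  unfold antiSequentWeight
  omega

theorem antiSequentWeight_insert₂_le :
    antiSequentWeight Γ (insert φ Δ) Ω ≤ φ.weight + antiSequentWeight Γ Δ Ω := by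
  have := sum_weight_insert_le φ Δ
  unfold antiSequentWeight
  omega

theorem antiSequentWeight_insert₃_le :
    antiSequentWeight Γ Δ (insert φ Ω) ≤ φ.weight + antiSequentWeight Γ Δ Ω := by
  have := sum_weight_insert_le φ Ω
  unfold antiSequentWeight
  omega

theorem RP.insert₁_of_pAntiRefutedBy
    (ih : ∀ Γ' Δ' Ω', antiSequentWeight Γ' Δ' Ω' < θ.weight + antiSequentWeight Γ Δ Ω →
      PAntiRefutedBy I Γ' Δ' Ω' → RP Γ' Δ' Ω') (hθ : ¬θ.IsBasic)
    (h : PAntiRefutedBy I (insert θ Γ) Δ Ω) : RP (insert θ Γ) Δ Ω := by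
  obtain ⟨hθI, hI⟩ := pAntiRefutedBy_insert₁.1 h
  cases θ with
  | atom | fls => exact absurd trivial hθ
  | neg φ =>
    rw [val, V3.negv_ne_f] at hθI
    refine RP.negF (ih _ _ _ ?_ (pAntiRefutedBy_insert₃.2 ⟨hθI, hI⟩))
    grw [antiSequentWeight_insert₃_le]; simp only [weight]; omega
  | conj φ ψ =>
    obtain ⟨hφ, hψ⟩ := (V3.conjv_ne_f _ _).1 hθI
    refine RP.conjF (ih _ _ _ ?_ ?_)
    · grw [antiSequentWeight_insert₁_le, antiSequentWeight_insert₁_le]; simp only [weight]; omega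
    · exact pAntiRefutedBy_insert₁.2 ⟨hφ, pAntiRefutedBy_insert₁.2 ⟨hψ, hI⟩⟩
  | imp φ ψ =>
    rcases (V3.impv_ne_f _ _).1 hθI with ⟨hφb, hφt⟩ | hψ
    · refine RP.impF1 (ih _ _ _ ?_ ?_)
      · grw [antiSequentWeight_insert₂_le, antiSequentWeight_insert₃_le]; simp only [weight]; omega
      · exact pAntiRefutedBy_insert₂.2 ⟨hφb, pAntiRefutedBy_insert₃.2 ⟨hφt, hI⟩⟩
    · refine RP.impF2 (ih _ _ _ ?_ (pAntiRefutedBy_insert₁.2 ⟨hψ, hI⟩))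
      grw [antiSequentWeight_insert₁_le]; simp only [weight]; omega

theorem RP.insert₂_of_pAntiRefutedBy
    (ih : ∀ Γ' Δ' Ω', antiSequentWeight Γ' Δ' Ω' < θ.weight + antiSequentWeight Γ Δ Ω →
      PAntiRefutedBy I Γ' Δ' Ω' → RP Γ' Δ' Ω') (hθ : ¬θ.IsBasic)
    (h : PAntiRefutedBy I Γ (insert θ Δ) Ω) : RP Γ (insert θ Δ) Ω := by
  obtain ⟨hθI, hI⟩ := pAntiRefutedBy_insert₂.1 h
  cases θ with
  | atom | fls => exact absurd trivial hθ
  | neg φ =>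
    rw [val, V3.negv_ne_b] at hθI
    refine RP.negB (ih _ _ _ ?_ (pAntiRefutedBy_insert₂.2 ⟨hθI, hI⟩))
    grw [antiSequentWeight_insert₂_le]; simp only [weight]; omega
  | conj φ ψ =>
    rcases (V3.conjv_ne_b _ _).1 hθI with ⟨hφ, hψ⟩ | ⟨hφb, hφt⟩ | ⟨hψb, hψt⟩
    · refine RP.conjB1 (ih _ _ _ ?_ ?_)
      · grw [antiSequentWeight_insert₂_le, antiSequentWeight_insert₂_le]; simp only [weight]; omega
      · exact pAntiRefutedBy_insert₂.2 ⟨hφ, pAntiRefutedBy_insert₂.2 ⟨hψ, hI⟩⟩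
    · refine RP.conjB2 (ih _ _ _ ?_ ?_)
      · grw [antiSequentWeight_insert₂_le, antiSequentWeight_insert₃_le]; simp only [weight]; omega
      · exact pAntiRefutedBy_insert₂.2 ⟨hφb, pAntiRefutedBy_insert₃.2 ⟨hφt, hI⟩⟩
    · refine RP.conjB3 (ih _ _ _ ?_ ?_)
      · grw [antiSequentWeight_insert₂_le, antiSequentWeight_insert₃_le]; simp only [weight]; omega
      · exact pAntiRefutedBy_insert₂.2 ⟨hψb, pAntiRefutedBy_insert₃.2 ⟨hψt, hI⟩⟩
  | imp φ ψ =>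
    rcases (V3.impv_ne_b _ _).1 hθI with ⟨hφb, hφt⟩ | hψ
    · refine RP.impB1 (ih _ _ _ ?_ ?_)
      · grw [antiSequentWeight_insert₂_le, antiSequentWeight_insert₃_le]; simp only [weight]; omega
      · exact pAntiRefutedBy_insert₂.2 ⟨hφb, pAntiRefutedBy_insert₃.2 ⟨hφt, hI⟩⟩
    · refine RP.impB2 (ih _ _ _ ?_ (pAntiRefutedBy_insert₂.2 ⟨hψ, hI⟩))
      grw [antiSequentWeight_insert₂_le]; simp only [weight]; omega

theorem RP.insert₃_of_pAntiRefutedBy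
    (ih : ∀ Γ' Δ' Ω', antiSequentWeight Γ' Δ' Ω' < θ.weight + antiSequentWeight Γ Δ Ω →
      PAntiRefutedBy I Γ' Δ' Ω' → RP Γ' Δ' Ω') (hθ : ¬θ.IsBasic)
    (h : PAntiRefutedBy I Γ Δ (insert θ Ω)) : RP Γ Δ (insert θ Ω) := by
  obtain ⟨hθI, hI⟩ := pAntiRefutedBy_insert₃.1 h
  cases θ with
  | atom | fls => exact absurd trivial hθ
  | neg φ =>
    rw [val, V3.negv_ne_t] at hθI
    refine RP.negT (ih _ _ _ ?_ (pAntiRefutedBy_insert₁.2 ⟨hθI, hI⟩))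
    grw [antiSequentWeight_insert₁_le]; simp only [weight]; omega
  | conj φ ψ =>
    rcases (V3.conjv_ne_t _ _).1 hθI with hφ | hψ
    · refine RP.conjT1 (ih _ _ _ ?_ (pAntiRefutedBy_insert₃.2 ⟨hφ, hI⟩))
      grw [antiSequentWeight_insert₃_le]; simp only [weight]; omega
    · refine RP.conjT2 (ih _ _ _ ?_ (pAntiRefutedBy_insert₃.2 ⟨hψ, hI⟩))
      grw [antiSequentWeight_insert₃_le]; simp only [weight]; omega
  | imp φ ψ =>
    obtain ⟨hφ, hψ⟩ := (V3.impv_ne_t _ _).1 hθI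
    refine RP.impT (ih _ _ _ ?_ ?_)
    · grw [antiSequentWeight_insert₁_le, antiSequentWeight_insert₃_le]; simp only [weight]; omega
    · exact pAntiRefutedBy_insert₁.2 ⟨hφ, pAntiRefutedBy_insert₃.2 ⟨hψ, hI⟩⟩

theorem RP.of_pAntiRefutedBy (h : PAntiRefutedBy I Γ Δ Ω) : RP Γ Δ Ω := by
  induction hn : antiSequentWeight Γ Δ Ω using Nat.strong_induction_on generalizing Γ Δ Ω with
  | _ n ih =>
  by_cases hbasic : ∀ φ ∈ Γ ∪ Δ ∪ Ω, φ.IsBasic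
  · exact RP.ax _ _ _ hbasic h.inter_eq_empty (fun hF => h.1 fls hF rfl)
  obtain ⟨θ, hθ, hθb⟩ := not_forall₂.1 hbasic
  have ih' : ∀ Γ' Δ' Ω', antiSequentWeight Γ' Δ' Ω' < n →
      PAntiRefutedBy I Γ' Δ' Ω' → RP Γ' Δ' Ω' := fun _ _ _ hlt h' => ih _ hlt h' rfl
  unfold antiSequentWeight at hn ih'
  simp only [Finset.mem_union] at hθ
  rcases hθ with (hθ | hθ) | hθ
  · rw [← Finset.insert_erase hθ] at h ⊢
    refine RP.insert₁_of_pAntiRefutedBy (fun Γ' Δ' Ω' hlt => ih' Γ' Δ' Ω' ?_) hθb h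
    have := Finset.add_sum_erase Γ weight hθ
    unfold antiSequentWeight at hlt; omega
  · rw [← Finset.insert_erase hθ] at h ⊢
    refine RP.insert₂_of_pAntiRefutedBy (fun Γ' Δ' Ω' hlt => ih' Γ' Δ' Ω' ?_) hθb h
    have := Finset.add_sum_erase Δ weight hθ
    unfold antiSequentWeight at hlt; omega
  · rw [← Finset.insert_erase hθ] at h ⊢
    refine RP.insert₃_of_pAntiRefutedBy (fun Γ' Δ' Ω' hlt => ih' Γ' Δ' Ω' ?_) hθb h
    have := Finset.add_sum_erase Ω weight hθ
    unfold antiSequentWeight at hlt; omega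

end Completeness

/-- Adequacy of the anti-sequent calculus `R_P`: a P-anti-sequent
`Γ₁ ∤ Γ₂ ∤ Γ₃` is provable in `R_P` iff it is refutable. -/
theorem RP_adequate (Γ₁ Γ₂ Γ₃ : Finset PForm) :
    RP Γ₁ Γ₂ Γ₃ ↔ PAntiRefutable Γ₁ Γ₂ Γ₃ :=
  ⟨RP.pAntiRefutable, fun ⟨_, h⟩ => RP.of_pAntiRefutedBy h⟩
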